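/- Let Ω ⊆ ℝⁿ be a nonempty measurable set, K an admissible kernel, ρ a recognition function, u₀ : Ω → ℝ bounded continuous, and 0 < T < ∞. Suppose u : Ω × [0,T) → ℝ is continuous, satisfies u(x,t) = u₀(x) + ∫₀ᵗ g[u](x,s) ds for all (x,t) ∈ Ω × [0,T), and sup_{t∈[0,T)} sup_{x∈Ω} |u(x,t)| < ∞. Then there exist η > 0 and a bounded continuous û : Ω × [0, T+η) → ℝ satisfying û(x,t) = u₀(x) + ∫₀ᵗ g[û](x,s) ds for all (x,t) ∈ Ω × [0,T+η) with û = u on Ω × [0,T). (Equivalently: if T < ∞ is the maximal existence time of the solution, then sup_{x∈Ω}|u(x,t)| → ∞ as t → T⁻.) -/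

import Mathlib

/-!
Since `|u| ≤ R` on `[0, T)`, only the values of `ρ'` on `[-2(R+1), 2(R+1)]` matter, and `ρ'` may
be replaced by a bounded, globally Lipschitz `ψ`. For such `ψ` some iterate of the Picard map
`h ↦ u₀ + ∫₀ᵗ g[h]` is a contraction on bounded continuous functions on `Ω × [0, τ]`, for every
`τ` (compare `|h₁ - h₂|` with the weight `e^{λt}`), so there is a global solution `U`, and solutions
are unique; hence `U = u` on `[0, T)`. As `|g[U]| ≤ CD`, `U` moves by at most `CD · η ≤ 1` on
`[T, T + η]` for `η = 1/(CD + 1)`, so `|U| ≤ R + 1` there, where `ψ = ρ'`: `U` solves the original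
equation on `[0, T + η)`.
-/

open MeasureTheory Set Filter Topology Function
open scoped NNReal BoundedContinuousFunction

namespace NonlocalIVP

theorem exists_lipschitzWith_bounded_eq_of_abs_le {f : ℝ → ℝ} {A L₀ : ℝ} (hA : 0 ≤ A)
    (hf : ∀ a b, |a| ≤ A → |b| ≤ A → |f a - f b| ≤ L₀ * |a - b|) :
    ∃ (L : ℝ≥0) (C : ℝ) (ψ : ℝ → ℝ),
      LipschitzWith L ψ ∧ (∀ a, |ψ a| ≤ C) ∧ ∀ a, |a| ≤ A → ψ a = f a := by
  have hAA : -A ≤ A := by linarith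
  have hfL : LipschitzOnWith L₀.toNNReal f (Icc (-A) A) :=
    LipschitzOnWith.of_dist_le_mul fun a ha b hb => by
      rw [Real.dist_eq, Real.dist_eq]
      exact (hf a b (abs_le.2 ha) (abs_le.2 hb)).trans
        (mul_le_mul_of_nonneg_right (Real.le_coe_toNNReal L₀) (abs_nonneg _))
  obtain ⟨C, hC⟩ := isCompact_Icc.exists_bound_of_continuousOn hfL.continuousOn
  refine ⟨L₀.toNNReal, C, IccExtend hAA ((Icc (-A) A).domRestrict f), ?_,
    fun a => hC _ (projIcc _ _ hAA a).2, fun a ha => IccExtend_of_mem hAA _ (abs_le.1 ha)⟩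
  have hψ := hfL.to_restrict.comp (LipschitzWith.projIcc hAA)
  rw [mul_one] at hψ
  exact hψ

theorem tendsto_integral_abs_sub_of_forall_dist_lt {Y : Type*} [PseudoMetricSpace Y]
    [MeasurableSpace Y] {μ : Measure Y} {Ω : Set Y} {K : Y → Y → ℝ} {x₀ : Y}
    (hK : ∀ ε > (0 : ℝ), ∃ δ > (0 : ℝ), ∀ x ∈ Ω, dist x x₀ < δ →
      ∫ y in Ω, |K x y - K x₀ y| ∂μ < ε) :
    Tendsto (fun x => ∫ y in Ω, |K x y - K x₀ y| ∂μ) (𝓝[Ω] x₀) (𝓝 0) := by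
  refine Metric.tendsto_nhdsWithin_nhds.2 fun ε hε => ?_
  obtain ⟨δ, hδ, hKδ⟩ := hK ε hε
  refine ⟨δ, hδ, fun {x} hx hd => ?_⟩
  rw [Real.dist_eq, sub_zero, abs_of_nonneg (integral_nonneg fun _ => abs_nonneg _)]
  exact hKδ x hx hd

variable {X : Type*}

section ExtendByZero

variable [TopologicalSpace X]

open scoped Classical in
noncomputable def extendByZero {S : Set (X × ℝ)} (w : S →ᵇ ℝ) (y : X) (s : ℝ) : ℝ :=
  if hys : (y, s) ∈ S then w ⟨(y, s), hys⟩ else 0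

theorem extendByZero_of_mem {S : Set (X × ℝ)} (w : S →ᵇ ℝ) {y : X} {s : ℝ} (hys : (y, s) ∈ S) :
    extendByZero w y s = w ⟨(y, s), hys⟩ :=
  dif_pos hys

theorem continuousOn_extendByZero {S : Set (X × ℝ)} (w : S →ᵇ ℝ) :
    ContinuousOn (extendByZero w).uncurry S := by
  rw [continuousOn_iff_continuous_domRestrict]
  exact w.continuous.congr fun p => (extendByZero_of_mem w p.2).symm

end ExtendByZero

variable [MeasurableSpace X]

noncomputable def nonlocalTerm (μ : Measure X) (Ω : Set X) (K : X → X → ℝ) (ψ : ℝ → ℝ)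
    (h : X → ℝ → ℝ) (x : X) (s : ℝ) : ℝ :=
  ∫ y in Ω, K x y * ψ (h x s - h y s) ∂μ

noncomputable def picard (μ : Measure X) (Ω : Set X) (K : X → X → ℝ) (ψ : ℝ → ℝ)
    (u₀ : X → ℝ) (h : X → ℝ → ℝ) (x : X) (t : ℝ) : ℝ :=
  u₀ x + ∫ s in (0 : ℝ)..t, nonlocalTerm μ Ω K ψ h x s

variable {μ : Measure X} {Ω : Set X} {K : X → X → ℝ} {D : ℝ} {ψ : ℝ → ℝ} {L : ℝ≥0} {C : ℝ}
  {h h₁ h₂ : X → ℝ → ℝ} {x x₀ : X} {s : ℝ}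

theorem picard_congr_of_abs_le {ψ₁ ψ₂ : ℝ → ℝ} {A : ℝ} (hψ : ∀ a, |a| ≤ 2 * A → ψ₁ a = ψ₂ a)
    (hΩ : MeasurableSet Ω) (u₀ : X → ℝ) {t : ℝ} (hh : ∀ y ∈ Ω, ∀ s ∈ Icc 0 t, |h y s| ≤ A)
    (hx : x ∈ Ω) (ht : 0 ≤ t) : picard μ Ω K ψ₁ u₀ h x t = picard μ Ω K ψ₂ u₀ h x t := by
  refine congrArg (u₀ x + ·) (intervalIntegral.integral_congr fun s hs =>
    setIntegral_congr_fun hΩ fun y hy => ?_)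
  rw [uIcc_of_le ht] at hs
  have hxy : |h x s - h y s| ≤ 2 * A :=
    (abs_sub _ _).trans (by linarith [hh x hx s hs, hh y hy s hs])
  simp only [hψ _ hxy]

variable [TopologicalSpace X]

structure IsAdmissibleKernel (μ : Measure X) (Ω : Set X) (K : X → X → ℝ) (D : ℝ) : Prop where
  measurableSet : MeasurableSet Ω
  nonneg : ∀ x y, 0 ≤ K x y
  integrableOn : ∀ x ∈ Ω, IntegrableOn (K x) Ω μ
  integral_le : ∀ x ∈ Ω, ∫ y in Ω, K x y ∂μ ≤ D
  bound_nonneg : 0 ≤ D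
  tendsto_integral_abs_sub : ∀ x₀ ∈ Ω,
    Tendsto (fun x => ∫ y in Ω, |K x y - K x₀ y| ∂μ) (𝓝[Ω] x₀) (𝓝 0)

namespace IsAdmissibleKernel

theorem abs_mul_le (hK : IsAdmissibleKernel μ Ω K D) {a c : ℝ} (ha : |a| ≤ c) (x y : X) :
    |K x y * a| ≤ c * K x y := by
  rw [abs_mul, abs_of_nonneg (hK.nonneg x y), mul_comm]
  exact mul_le_mul_of_nonneg_right ha (hK.nonneg x y)

theorem abs_setIntegral_mul_le (hK : IsAdmissibleKernel μ Ω K D) {f : X → ℝ} {c : ℝ}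
    (hx : x ∈ Ω) (hf : ∀ y ∈ Ω, |f y| ≤ c) : |∫ y in Ω, K x y * f y ∂μ| ≤ c * D := by
  have hc : 0 ≤ c := (abs_nonneg _).trans (hf x hx)
  calc |∫ y in Ω, K x y * f y ∂μ| ≤ ∫ y in Ω, c * K x y ∂μ := by
        rw [← Real.norm_eq_abs]
        refine norm_integral_le_of_norm_le ((hK.integrableOn x hx).const_mul c) ?_
        filter_upwards [ae_restrict_mem hK.measurableSet] with y hy
        exact hK.abs_mul_le (hf y hy) x y
    _ = c * ∫ y in Ω, K x y ∂μ := integral_const_mul c _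
    _ ≤ c * D := mul_le_mul_of_nonneg_left (hK.integral_le x hx) hc

theorem integrableOn_mul (hK : IsAdmissibleKernel μ Ω K D) {f : X → ℝ} {c : ℝ} (hx : x ∈ Ω)
    (hf : AEStronglyMeasurable f (μ.restrict Ω)) (hfc : ∀ y, |f y| ≤ c) :
    IntegrableOn (fun y => K x y * f y) Ω μ :=
  (hK.integrableOn x hx).mul_bdd hf (Eventually.of_forall hfc)

end IsAdmissibleKernel

theorem abs_nonlocalTerm_le (hK : IsAdmissibleKernel μ Ω K D) (hψC : ∀ a, |ψ a| ≤ C)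
    (hx : x ∈ Ω) : |nonlocalTerm μ Ω K ψ h x s| ≤ C * D :=
  hK.abs_setIntegral_mul_le hx fun _ _ => hψC _

theorem integrableOn_nonlocalTerm_integrand (hK : IsAdmissibleKernel μ Ω K D)
    (hψ : Continuous ψ) (hψC : ∀ a, |ψ a| ≤ C) (hx : x ∈ Ω)
    (hs : AEStronglyMeasurable (fun y => h y s) (μ.restrict Ω)) (z : X) :
    IntegrableOn (fun y => K x y * ψ (h z s - h y s)) Ω μ :=
  hK.integrableOn_mul hx (hψ.comp_aestronglyMeasurable (aestronglyMeasurable_const.sub hs))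
    fun _ => hψC _

theorem abs_nonlocalTerm_sub_le (hK : IsAdmissibleKernel μ Ω K D) (hψ : LipschitzWith L ψ)
    (hψC : ∀ a, |ψ a| ≤ C) (hx : x ∈ Ω)
    (hs₁ : AEStronglyMeasurable (fun y => h₁ y s) (μ.restrict Ω))
    (hs₂ : AEStronglyMeasurable (fun y => h₂ y s) (μ.restrict Ω)) {β : ℝ}
    (hβ : ∀ y ∈ Ω, |h₁ y s - h₂ y s| ≤ β) :
    |nonlocalTerm μ Ω K ψ h₁ x s - nonlocalTerm μ Ω K ψ h₂ x s| ≤ 2 * L * β * D := by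
  rw [nonlocalTerm, nonlocalTerm, ← integral_sub
    (integrableOn_nonlocalTerm_integrand hK hψ.continuous hψC hx hs₁ x)
    (integrableOn_nonlocalTerm_integrand hK hψ.continuous hψC hx hs₂ x)]
  simp_rw [← mul_sub]
  refine hK.abs_setIntegral_mul_le hx fun y hy => ?_
  calc |ψ (h₁ x s - h₁ y s) - ψ (h₂ x s - h₂ y s)|
      ≤ L * |(h₁ x s - h₁ y s) - (h₂ x s - h₂ y s)| := by
        simpa only [Real.dist_eq] using hψ.dist_le_mul _ _
    _ ≤ L * (β + β) := by
        gcongr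
        rw [sub_sub_sub_comm]
        exact (abs_sub _ _).trans (add_le_add (hβ x hx) (hβ y hy))
    _ = 2 * L * β := by ring

theorem abs_nonlocalTerm_sub_nonlocalTerm_le (hK : IsAdmissibleKernel μ Ω K D)
    (hψ : LipschitzWith L ψ) (hψC : ∀ a, |ψ a| ≤ C) (hx : x ∈ Ω) (hx₀ : x₀ ∈ Ω)
    (hs : AEStronglyMeasurable (fun y => h y s) (μ.restrict Ω)) :
    |nonlocalTerm μ Ω K ψ h x s - nonlocalTerm μ Ω K ψ h x₀ s|
      ≤ C * ∫ y in Ω, |K x y - K x₀ y| ∂μ + L * |h x s - h x₀ s| * D := by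
  set f : X → X → ℝ := fun z y => ψ (h z s - h y s)
  have hint {z : X} (hz : z ∈ Ω) (w : X) : IntegrableOn (fun y => K z y * f w y) Ω μ :=
    integrableOn_nonlocalTerm_integrand hK hψ.continuous hψC hz hs w
  have hsplit : nonlocalTerm μ Ω K ψ h x s - nonlocalTerm μ Ω K ψ h x₀ s
      = ∫ y in Ω, (K x y - K x₀ y) * f x y ∂μ + ∫ y in Ω, K x₀ y * (f x y - f x₀ y) ∂μ := by
    simp_rw [sub_mul, mul_sub]
    rw [integral_sub (hint hx x) (hint hx₀ x), integral_sub (hint hx₀ x) (hint hx₀ x₀)]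
    simp only [nonlocalTerm, f]
    ring
  have hdiff : |∫ y in Ω, (K x y - K x₀ y) * f x y ∂μ| ≤ C * ∫ y in Ω, |K x y - K x₀ y| ∂μ := by
    rw [← integral_const_mul, ← Real.norm_eq_abs]
    refine norm_integral_le_of_norm_le
      (((hK.integrableOn x hx).sub (hK.integrableOn x₀ hx₀)).abs.const_mul C)
      (Eventually.of_forall fun y => ?_)
    rw [Real.norm_eq_abs, abs_mul, mul_comm]
    exact mul_le_mul_of_nonneg_right (hψC _) (abs_nonneg _)
  have hlip : |∫ y in Ω, K x₀ y * (f x y - f x₀ y) ∂μ| ≤ L * |h x s - h x₀ s| * D := by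
    refine hK.abs_setIntegral_mul_le hx₀ fun y _ => ?_
    calc |f x y - f x₀ y| ≤ L * |(h x s - h y s) - (h x₀ s - h y s)| := by
          simpa only [Real.dist_eq] using hψ.dist_le_mul _ _
      _ = L * |h x s - h x₀ s| := by rw [sub_sub_sub_cancel_right]
  rw [hsplit]
  exact (abs_add_le _ _).trans (add_le_add hdiff hlip)

theorem continuousWithinAt_nonlocalTerm_left (hK : IsAdmissibleKernel μ Ω K D)
    (hψ : LipschitzWith L ψ) (hψC : ∀ a, |ψ a| ≤ C) (hx₀ : x₀ ∈ Ω)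
    (hs : AEStronglyMeasurable (fun y => h y s) (μ.restrict Ω))
    (hcont : ContinuousWithinAt (fun y => h y s) Ω x₀) :
    ContinuousWithinAt (fun x => nonlocalTerm μ Ω K ψ h x s) Ω x₀ := by
  rw [ContinuousWithinAt, tendsto_iff_dist_tendsto_zero]
  have hbound : Tendsto (fun x => C * ∫ y in Ω, |K x y - K x₀ y| ∂μ + L * |h x s - h x₀ s| * D)
      (𝓝[Ω] x₀) (𝓝 0) := by
    simpa using ((hK.tendsto_integral_abs_sub x₀ hx₀).const_mul C).add
      (((hcont.tendsto.sub_const (h x₀ s)).abs.const_mul (L : ℝ)).mul_const D)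
  refine squeeze_zero' (Eventually.of_forall fun _ => dist_nonneg) ?_ hbound
  filter_upwards [self_mem_nhdsWithin] with x hx
  exact (Real.dist_eq _ _).trans_le (abs_nonlocalTerm_sub_nonlocalTerm_le hK hψ hψC hx hx₀ hs)

theorem abs_picard_le (hK : IsAdmissibleKernel μ Ω K D) (hψC : ∀ a, |ψ a| ≤ C) {u₀ : X → ℝ}
    {M₀ : ℝ} (hu₀ : ∀ x ∈ Ω, |u₀ x| ≤ M₀) (h : X → ℝ → ℝ) (hx : x ∈ Ω) {t τ : ℝ}
    (ht : t ∈ Icc 0 τ) : |picard μ Ω K ψ u₀ h x t| ≤ M₀ + C * D * τ := by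
  have hCD : 0 ≤ C * D := mul_nonneg ((abs_nonneg _).trans (hψC 0)) hK.bound_nonneg
  have hint : |∫ s in (0 : ℝ)..t, nonlocalTerm μ Ω K ψ h x s| ≤ C * D * |t - 0| :=
    intervalIntegral.norm_integral_le_of_norm_le_const fun s _ =>
      (Real.norm_eq_abs _).trans_le (abs_nonlocalTerm_le hK hψC hx)
  rw [sub_zero, abs_of_nonneg ht.1] at hint
  exact (abs_add_le _ _).trans
    (add_le_add (hu₀ x hx) (hint.trans (mul_le_mul_of_nonneg_left ht.2 hCD)))

section OpensMeasurable

variable [OpensMeasurableSpace X] {τ : ℝ}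

theorem continuousOn_nonlocalTerm_right (hK : IsAdmissibleKernel μ Ω K D) (hψ : Continuous ψ)
    (hψC : ∀ a, |ψ a| ≤ C) {I : Set ℝ} (hh : ContinuousOn h.uncurry (Ω ×ˢ I)) (hx : x ∈ Ω) :
    ContinuousOn (nonlocalTerm μ Ω K ψ h x) I := by
  refine continuousOn_of_dominated (bound := fun y => C * K x y)
    (fun s hs => (integrableOn_nonlocalTerm_integrand hK hψ hψC hx
      ((hh.uncurry_right s hs).aestronglyMeasurable hK.measurableSet) x).aestronglyMeasurable)
    (fun s _ => Eventually.of_forall fun y => hK.abs_mul_le (hψC _) x y)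
    ((hK.integrableOn x hx).const_mul C) ?_
  filter_upwards [ae_restrict_mem hK.measurableSet] with y hy
  exact continuousOn_const.mul
    (hψ.comp_continuousOn ((hh.uncurry_left x hx).sub (hh.uncurry_left y hy)))

theorem intervalIntegrable_nonlocalTerm (hK : IsAdmissibleKernel μ Ω K D) (hψ : Continuous ψ)
    (hψC : ∀ a, |ψ a| ≤ C) (hh : ContinuousOn h.uncurry (Ω ×ˢ Icc 0 τ)) (hx : x ∈ Ω)
    {a b : ℝ} (ha : a ∈ Icc 0 τ) (hb : b ∈ Icc 0 τ) :
    IntervalIntegrable (nonlocalTerm μ Ω K ψ h x) volume a b :=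
  ((continuousOn_nonlocalTerm_right hK hψ hψC hh hx).mono
    (uIcc_subset_Icc ha hb)).intervalIntegrable

theorem abs_integral_nonlocalTerm_sub_le (hK : IsAdmissibleKernel μ Ω K D) (hψ : Continuous ψ)
    (hψC : ∀ a, |ψ a| ≤ C) (hh : ContinuousOn h.uncurry (Ω ×ˢ Icc 0 τ)) (hx : x ∈ Ω)
    {t t' : ℝ} (ht : t ∈ Icc 0 τ) (ht' : t' ∈ Icc 0 τ) :
    |(∫ s in (0 : ℝ)..t, nonlocalTerm μ Ω K ψ h x s)
        - ∫ s in (0 : ℝ)..t', nonlocalTerm μ Ω K ψ h x s|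
      ≤ C * D * |t - t'| := by
  have h0 : (0 : ℝ) ∈ Icc 0 τ := ⟨le_rfl, ht.1.trans ht.2⟩
  rw [intervalIntegral.integral_interval_sub_left
    (intervalIntegrable_nonlocalTerm hK hψ hψC hh hx h0 ht)
    (intervalIntegrable_nonlocalTerm hK hψ hψC hh hx h0 ht'), ← Real.norm_eq_abs]
  exact intervalIntegral.norm_integral_le_of_norm_le_const fun s _ => abs_nonlocalTerm_le hK hψC hx

/-- The weight `e^{λt}` with `λ ≥ 4LD` turns the Lipschitz constant `2LD` of the nonlocal term
into the contraction factor `1/2`. -/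
theorem abs_picard_sub_picard_le (hK : IsAdmissibleKernel μ Ω K D) (hψ : LipschitzWith L ψ)
    (hψC : ∀ a, |ψ a| ≤ C) {lam B : ℝ} (hlam : 0 < lam) (hLlam : 4 * L * D ≤ lam)
    (hh₁ : ContinuousOn h₁.uncurry (Ω ×ˢ Icc 0 τ)) (hh₂ : ContinuousOn h₂.uncurry (Ω ×ˢ Icc 0 τ))
    (hB : ∀ y ∈ Ω, ∀ s ∈ Icc 0 τ, |h₁ y s - h₂ y s| ≤ B * Real.exp (lam * s)) (u₀ : X → ℝ)
    (hx : x ∈ Ω) {t : ℝ} (ht : t ∈ Icc 0 τ) :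
    |picard μ Ω K ψ u₀ h₁ x t - picard μ Ω K ψ u₀ h₂ x t| ≤ B / 2 * Real.exp (lam * t) := by
  have h0 : (0 : ℝ) ∈ Icc 0 τ := ⟨le_rfl, ht.1.trans ht.2⟩
  have hB0 : 0 ≤ B := by simpa using (abs_nonneg _).trans (hB x hx 0 h0)
  have hexp : ∫ s in (0 : ℝ)..t, Real.exp (lam * s) = lam⁻¹ * (Real.exp (lam * t) - 1) := by
    simp [intervalIntegral.integral_comp_mul_left (fun s => Real.exp s) hlam.ne', integral_exp]
  have hrate : 2 * L * D * lam⁻¹ ≤ 1 / 2 := by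
    rw [← div_eq_mul_inv, div_le_iff₀ hlam]
    linarith
  have hslice (h : X → ℝ → ℝ) (hh : ContinuousOn h.uncurry (Ω ×ˢ Icc 0 τ)) {s : ℝ}
      (hs : s ∈ Ioc 0 t) :
      AEStronglyMeasurable (fun y => h y s) (μ.restrict Ω) :=
    (hh.uncurry_right s (show s ∈ Icc 0 τ from ⟨hs.1.le, hs.2.trans ht.2⟩)).aestronglyMeasurable
      hK.measurableSet
  rw [picard, picard, add_sub_add_left_eq_sub, ← intervalIntegral.integral_sub
    (intervalIntegrable_nonlocalTerm hK hψ.continuous hψC hh₁ hx h0 ht)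
    (intervalIntegrable_nonlocalTerm hK hψ.continuous hψC hh₂ hx h0 ht), ← Real.norm_eq_abs]
  calc ‖∫ s in (0 : ℝ)..t, (nonlocalTerm μ Ω K ψ h₁ x s - nonlocalTerm μ Ω K ψ h₂ x s)‖
      ≤ ∫ s in (0 : ℝ)..t, 2 * L * D * B * Real.exp (lam * s) := by
        refine intervalIntegral.norm_integral_le_of_norm_le ht.1
          (Eventually.of_forall fun s hs => ?_)
          ((by fun_prop : Continuous _).intervalIntegrable _ _)
        refine (abs_nonlocalTerm_sub_le hK hψ hψC hx (hslice h₁ hh₁ hs) (hslice h₂ hh₂ hs)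
          fun y hy => hB y hy s ⟨hs.1.le, hs.2.trans ht.2⟩).trans_eq ?_
        ring
    _ = B * (2 * L * D * lam⁻¹) * (Real.exp (lam * t) - 1) := by
        rw [intervalIntegral.integral_const_mul, hexp]
        ring
    _ ≤ B * (1 / 2) * Real.exp (lam * t) := by
        have hexp1 : 1 ≤ Real.exp (lam * t) := Real.one_le_exp (mul_nonneg hlam.le ht.1)
        exact mul_le_mul (by gcongr) (by linarith) (by linarith) (by linarith)
    _ = B / 2 * Real.exp (lam * t) := by ring

theorem abs_sub_le_of_picard_succ (hK : IsAdmissibleKernel μ Ω K D) (hψ : LipschitzWith L ψ)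
    (hψC : ∀ a, |ψ a| ≤ C) {lam B : ℝ} (hlam : 0 < lam) (hLlam : 4 * L * D ≤ lam) {u₀ : X → ℝ}
    {f g : ℕ → X → ℝ → ℝ} (hf : ∀ m, ContinuousOn (f m).uncurry (Ω ×ˢ Icc 0 τ))
    (hg : ∀ m, ContinuousOn (g m).uncurry (Ω ×ˢ Icc 0 τ))
    (hf_succ : ∀ m, ∀ x ∈ Ω, ∀ t ∈ Icc 0 τ, f (m + 1) x t = picard μ Ω K ψ u₀ (f m) x t)
    (hg_succ : ∀ m, ∀ x ∈ Ω, ∀ t ∈ Icc 0 τ, g (m + 1) x t = picard μ Ω K ψ u₀ (g m) x t)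
    (hB : ∀ x ∈ Ω, ∀ t ∈ Icc 0 τ, |f 0 x t - g 0 x t| ≤ B) (m : ℕ) :
    ∀ x ∈ Ω, ∀ t ∈ Icc 0 τ, |f m x t - g m x t| ≤ B / 2 ^ m * Real.exp (lam * t) := by
  induction m with
  | zero =>
    intro x hx t ht
    rw [pow_zero, div_one]
    exact (hB x hx t ht).trans (le_mul_of_one_le_right ((abs_nonneg _).trans (hB x hx t ht))
      (Real.one_le_exp (mul_nonneg hlam.le ht.1)))
  | succ m ih =>
    intro x hx t ht
    rw [hf_succ m x hx t ht, hg_succ m x hx t ht, pow_succ, ← div_div]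
    exact abs_picard_sub_picard_le hK hψ hψC hlam hLlam (hf m) (hg m) ih u₀ hx ht

theorem eqOn_of_eq_picard (hK : IsAdmissibleKernel μ Ω K D) (hψ : LipschitzWith L ψ)
    (hψC : ∀ a, |ψ a| ≤ C) {u₀ : X → ℝ} {M₀ : ℝ} (hu₀ : ∀ x ∈ Ω, |u₀ x| ≤ M₀)
    (hh₁ : ContinuousOn h₁.uncurry (Ω ×ˢ Icc 0 τ)) (hh₂ : ContinuousOn h₂.uncurry (Ω ×ˢ Icc 0 τ))
    (h₁_eq : ∀ x ∈ Ω, ∀ t ∈ Icc 0 τ, h₁ x t = picard μ Ω K ψ u₀ h₁ x t)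
    (h₂_eq : ∀ x ∈ Ω, ∀ t ∈ Icc 0 τ, h₂ x t = picard μ Ω K ψ u₀ h₂ x t) :
    ∀ x ∈ Ω, ∀ t ∈ Icc 0 τ, h₁ x t = h₂ x t := by
  have hB : ∀ x ∈ Ω, ∀ t ∈ Icc 0 τ, |h₁ x t - h₂ x t| ≤ 2 * (M₀ + C * D * τ) := by
    intro x hx t ht
    rw [h₁_eq x hx t ht, h₂_eq x hx t ht]
    linarith [abs_sub (picard μ Ω K ψ u₀ h₁ x t) (picard μ Ω K ψ u₀ h₂ x t),
      abs_picard_le hK hψC hu₀ h₁ hx ht, abs_picard_le hK hψC hu₀ h₂ hx ht]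
  intro x hx t ht
  have hlim : Tendsto (fun m : ℕ => 2 * (M₀ + C * D * τ) / 2 ^ m * Real.exp ((4 * L * D + 1) * t))
      atTop (𝓝 0) := by
    simpa using (tendsto_const_nhds.div_atTop
      (tendsto_pow_atTop_atTop_of_one_lt one_lt_two)).mul_const (Real.exp ((4 * L * D + 1) * t))
  have hle := ge_of_tendsto' hlim fun m =>
    abs_sub_le_of_picard_succ hK hψ hψC (lam := 4 * L * D + 1)
      (by nlinarith [hK.bound_nonneg, L.coe_nonneg]) (by linarith) (f := fun _ => h₁)
      (g := fun _ => h₂) (fun _ => hh₁) (fun _ => hh₂) (fun _ => h₁_eq) (fun _ => h₂_eq) hB m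
      x hx t ht
  exact sub_eq_zero.1 (abs_nonpos_iff.1 hle)

theorem eqOn_Ico_of_eq_picard (hK : IsAdmissibleKernel μ Ω K D) (hψ : LipschitzWith L ψ)
    (hψC : ∀ a, |ψ a| ≤ C) {u₀ : X → ℝ} {M₀ : ℝ} (hu₀ : ∀ x ∈ Ω, |u₀ x| ≤ M₀) {T : ℝ}
    (hTτ : T ≤ τ) (hh₁ : ContinuousOn h₁.uncurry (Ω ×ˢ Icc 0 τ))
    (hh₂ : ContinuousOn h₂.uncurry (Ω ×ˢ Ico 0 T))
    (h₁_eq : ∀ x ∈ Ω, ∀ t ∈ Icc 0 τ, h₁ x t = picard μ Ω K ψ u₀ h₁ x t)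
    (h₂_eq : ∀ x ∈ Ω, ∀ t ∈ Ico 0 T, h₂ x t = picard μ Ω K ψ u₀ h₂ x t) :
    ∀ x ∈ Ω, ∀ t ∈ Ico 0 T, h₁ x t = h₂ x t := by
  intro x hx t ht
  have hsub : Icc 0 t ⊆ Ico 0 T := Icc_subset_Ico_right ht.2
  have hsub' : Icc 0 t ⊆ Icc 0 τ :=
    hsub.trans (Ico_subset_Icc_self.trans (Icc_subset_Icc_right hTτ))
  exact eqOn_of_eq_picard hK hψ hψC hu₀ (hh₁.mono (prod_mono_right hsub'))
    (hh₂.mono (prod_mono_right hsub)) (fun y hy s hs => h₁_eq y hy s (hsub' hs))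
    (fun y hy s hs => h₂_eq y hy s (hsub hs)) x hx t ⟨ht.1, le_rfl⟩

theorem abs_le_of_eq_picard (hK : IsAdmissibleKernel μ Ω K D) (hψ : Continuous ψ)
    (hψC : ∀ a, |ψ a| ≤ C) {u₀ : X → ℝ} {U : X → ℝ → ℝ}
    (hU : ContinuousOn U.uncurry (Ω ×ˢ Icc 0 τ))
    (hU_eq : ∀ x ∈ Ω, ∀ t ∈ Icc 0 τ, U x t = picard μ Ω K ψ u₀ U x t) {T R : ℝ} (hT : 0 < T)
    (hTτ : T ≤ τ) (hR : ∀ x ∈ Ω, ∀ t ∈ Ico 0 T, |U x t| ≤ R) (hx : x ∈ Ω) {t : ℝ}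
    (ht : t ∈ Icc 0 τ) : |U x t| ≤ R + C * D * (τ - T) := by
  have hCD : 0 ≤ C * D := mul_nonneg ((abs_nonneg _).trans (hψC 0)) hK.bound_nonneg
  rcases lt_or_ge t T with htT | hTt
  · exact (hR x hx t ⟨ht.1, htT⟩).trans
      (le_add_of_nonneg_right (mul_nonneg hCD (sub_nonneg.2 hTτ)))
  have hTmem : T ∈ Icc 0 τ := ⟨hT.le, hTτ⟩
  have hUT : |U x T| ≤ R := by
    refine ContinuousWithinAt.closure_le (by rw [closure_Ico hT.ne]; exact right_mem_Icc.2 hT.le)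
      ((((hU.uncurry_left x hx).continuousWithinAt hTmem).mono
        (Ico_subset_Icc_self.trans (Icc_subset_Icc_right hTτ))).abs)
      continuousWithinAt_const (hR x hx)
  have hstep : |U x t - U x T| ≤ C * D * |t - T| := by
    rw [hU_eq x hx t ht, hU_eq x hx T hTmem, picard, picard, add_sub_add_left_eq_sub]
    exact abs_integral_nonlocalTerm_sub_le hK hψ hψC hU hx ht hTmem
  rw [abs_of_nonneg (sub_nonneg.2 hTt)] at hstep
  have : C * D * (t - T) ≤ C * D * (τ - T) := mul_le_mul_of_nonneg_left (by linarith [ht.2]) hCD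
  linarith [abs_sub_abs_le_abs_sub (U x t) (U x T)]

theorem dist_iterate_le_of_picard (hK : IsAdmissibleKernel μ Ω K D) (hψ : LipschitzWith L ψ)
    (hψC : ∀ a, |ψ a| ≤ C) {u₀ : X → ℝ}
    {Φ : (Ω ×ˢ Icc (0 : ℝ) τ →ᵇ ℝ) → (Ω ×ˢ Icc (0 : ℝ) τ →ᵇ ℝ)}
    (hΦ : ∀ w p, Φ w p = picard μ Ω K ψ u₀ (extendByZero w) p.1.1 p.1.2) (m : ℕ)
    (w w' : Ω ×ˢ Icc (0 : ℝ) τ →ᵇ ℝ) :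
    dist (Φ^[m] w) (Φ^[m] w') ≤ Real.exp ((4 * L * D + 1) * τ) / 2 ^ m * dist w w' := by
  have hlam : 0 < 4 * L * D + 1 := by nlinarith [hK.bound_nonneg, L.coe_nonneg]
  have hsucc (w : Ω ×ˢ Icc (0 : ℝ) τ →ᵇ ℝ) (m : ℕ) (x : X) (hx : x ∈ Ω) (t : ℝ)
      (ht : t ∈ Icc 0 τ) : extendByZero (Φ^[m + 1] w) x t
        = picard μ Ω K ψ u₀ (extendByZero (Φ^[m] w)) x t := by
    rw [extendByZero_of_mem _ (mk_mem_prod hx ht), iterate_succ_apply', hΦ]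
  refine (BoundedContinuousFunction.dist_le (by positivity)).2 fun p => ?_
  have hp := abs_sub_le_of_picard_succ hK hψ hψC hlam (by linarith) (B := dist w w')
    (f := fun m => extendByZero (Φ^[m] w)) (g := fun m => extendByZero (Φ^[m] w'))
    (fun _ => continuousOn_extendByZero _) (fun _ => continuousOn_extendByZero _)
    (hsucc w) (hsucc w') (fun x hx t ht => ?_) m p.1.1 p.2.1 p.1.2 p.2.2
  · rw [extendByZero_of_mem _ p.2, extendByZero_of_mem _ p.2, ← Real.dist_eq] at hp
    calc _ ≤ dist w w' / 2 ^ m * Real.exp ((4 * L * D + 1) * τ) :=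
          hp.trans (mul_le_mul_of_nonneg_left
            (Real.exp_le_exp.2 (mul_le_mul_of_nonneg_left p.2.2.2 hlam.le)) (by positivity))
      _ = _ := by ring
  · rw [extendByZero_of_mem _ (mk_mem_prod hx ht), extendByZero_of_mem _ (mk_mem_prod hx ht),
      ← Real.dist_eq]
    exact BoundedContinuousFunction.dist_coe_le_dist _

variable [FirstCountableTopology X]

theorem continuousOn_integral_nonlocalTerm (hK : IsAdmissibleKernel μ Ω K D)
    (hψ : LipschitzWith L ψ) (hψC : ∀ a, |ψ a| ≤ C)
    (hh : ContinuousOn h.uncurry (Ω ×ˢ Icc 0 τ)) :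
    ContinuousOn (fun p : X × ℝ => ∫ s in (0 : ℝ)..p.2, nonlocalTerm μ Ω K ψ h p.1 s)
      (Ω ×ˢ Icc 0 τ) := by
  have hCD : 0 ≤ C * D := mul_nonneg ((abs_nonneg _).trans (hψC 0)) hK.bound_nonneg
  refine continuousOn_prod_of_continuousOn_lipschitzOnWith' _ (C * D).toNNReal
    (fun x hx => LipschitzOnWith.of_dist_le_mul fun t ht t' ht' => ?_) fun t ht x₀ hx₀ => ?_
  · rw [Real.dist_eq, Real.dist_eq, Real.coe_toNNReal _ hCD]
    exact abs_integral_nonlocalTerm_sub_le hK hψ.continuous hψC hh hx ht ht'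
  have hsub : uIoc (0 : ℝ) t ⊆ Icc 0 τ := by
    rw [uIoc_of_le ht.1]
    exact Ioc_subset_Icc_self.trans (Icc_subset_Icc_right ht.2)
  refine intervalIntegral.continuousWithinAt_of_dominated_interval (bound := fun _ => C * D)
    ?_ ?_ intervalIntegrable_const (Eventually.of_forall fun s hs => ?_)
  · filter_upwards [self_mem_nhdsWithin] with x hx
    exact ((continuousOn_nonlocalTerm_right hK hψ.continuous hψC hh hx).mono
      hsub).aestronglyMeasurable measurableSet_uIoc
  · filter_upwards [self_mem_nhdsWithin] with x hx
    exact Eventually.of_forall fun s _ => abs_nonlocalTerm_le hK hψC hx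
  · have hslice := hh.uncurry_right s (hsub hs)
    exact continuousWithinAt_nonlocalTerm_left hK hψ hψC hx₀
      (hslice.aestronglyMeasurable hK.measurableSet) (hslice x₀ hx₀)

theorem continuousOn_picard (hK : IsAdmissibleKernel μ Ω K D) (hψ : LipschitzWith L ψ)
    (hψC : ∀ a, |ψ a| ≤ C) {u₀ : X → ℝ} (hu₀ : ContinuousOn u₀ Ω)
    (hh : ContinuousOn h.uncurry (Ω ×ˢ Icc 0 τ)) :
    ContinuousOn (picard μ Ω K ψ u₀ h).uncurry (Ω ×ˢ Icc 0 τ) :=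
  (hu₀.comp continuousOn_fst fun _ hp => hp.1).add
    (continuousOn_integral_nonlocalTerm hK hψ hψC hh)

theorem exists_eq_picard (hK : IsAdmissibleKernel μ Ω K D) (hψ : LipschitzWith L ψ)
    (hψC : ∀ a, |ψ a| ≤ C) {u₀ : X → ℝ} (hu₀ : ContinuousOn u₀ Ω) {M₀ : ℝ}
    (hu₀M : ∀ x ∈ Ω, |u₀ x| ≤ M₀) (τ : ℝ) :
    ∃ U : X → ℝ → ℝ, ContinuousOn U.uncurry (Ω ×ˢ Icc 0 τ) ∧
      ∀ x ∈ Ω, ∀ t ∈ Icc 0 τ, U x t = picard μ Ω K ψ u₀ U x t := by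
  obtain ⟨Φ, hΦ⟩ : ∃ Φ : (Ω ×ˢ Icc (0 : ℝ) τ →ᵇ ℝ) → (Ω ×ˢ Icc (0 : ℝ) τ →ᵇ ℝ),
      ∀ w p, Φ w p = picard μ Ω K ψ u₀ (extendByZero w) p.1.1 p.1.2 :=
    ⟨fun w => .ofNormedAddCommGroup _ (continuousOn_iff_continuous_domRestrict.1
      (continuousOn_picard hK hψ hψC hu₀ (continuousOn_extendByZero w))) (M₀ + C * D * τ)
      fun p => abs_picard_le hK hψC hu₀M _ p.2.1 p.2.2, fun _ _ => rfl⟩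
  obtain ⟨m, hm⟩ := pow_unbounded_of_one_lt (Real.exp ((4 * L * D + 1) * τ)) one_lt_two
  have hcontr : ContractingWith (Real.exp ((4 * L * D + 1) * τ) / 2 ^ m).toNNReal Φ^[m] :=
    ⟨Real.toNNReal_lt_one.2 ((div_lt_one (by positivity)).2 hm),
      LipschitzWith.of_dist_le_mul fun w w' => by
        rw [Real.coe_toNNReal _ (by positivity)]
        exact dist_iterate_le_of_picard hK hψ hψC hΦ m w w'⟩
  set w := hcontr.fixedPoint Φ^[m]
  have hfix : Φ w = w := ContractingWith.isFixedPt_fixedPoint_iterate hcontr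
  refine ⟨extendByZero w, continuousOn_extendByZero w, fun x hx t ht => ?_⟩
  rw [extendByZero_of_mem w (mk_mem_prod hx ht), ← hΦ w ⟨(x, t), mk_mem_prod hx ht⟩, hfix]

end OpensMeasurable

end NonlocalIVP

open NonlocalIVP in
theorem statement3_general
    (n : ℕ) (Ω : Set (EuclideanSpace ℝ (Fin n)))
    (hΩne : Ω.Nonempty) (hΩmeas : MeasurableSet Ω)
    -- `K` is an admissible kernel:
    (K : EuclideanSpace ℝ (Fin n) → EuclideanSpace ℝ (Fin n) → ℝ)
    (hKnonneg : ∀ x y, 0 ≤ K x y)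
    (hKint : ∀ x ∈ Ω, IntegrableOn (K x) Ω)
    (hKcont : ∀ x ∈ Ω, ∀ ε > (0:ℝ), ∃ δ > (0:ℝ), ∀ x' ∈ Ω, dist x' x < δ →
        (∫ y in Ω, |K x' y - K x y|) < ε)
    (D : ℝ) (hD : ∀ x ∈ Ω, (∫ y in Ω, K x y) ≤ D)
    -- `ρ` is a recognition function:
    (ρ : ℝ → ℝ)
    (hρ'lip : ∀ R : ℝ, 0 < R → ∃ L : ℝ, ∀ a b : ℝ, |a| ≤ R → |b| ≤ R →
        |deriv ρ a - deriv ρ b| ≤ L * |a - b|)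
    -- `u₀` bounded and continuous on `Ω`:
    (u₀ : EuclideanSpace ℝ (Fin n) → ℝ)
    (hu₀cont : ContinuousOn u₀ Ω) (M₀ : ℝ) (hu₀bd : ∀ x ∈ Ω, |u₀ x| ≤ M₀)
    -- `u` solves the IVP on `Ω × [0,T)` and stays uniformly bounded:
    (T : ℝ) (hT : 0 < T)
    (u : EuclideanSpace ℝ (Fin n) → ℝ → ℝ)
    (hucont : ContinuousOn (fun p : EuclideanSpace ℝ (Fin n) × ℝ => u p.1 p.2) (Ω ×ˢ Ico 0 T))
    (hueq : ∀ x ∈ Ω, ∀ t ∈ Ico (0:ℝ) T,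
        u x t = u₀ x + ∫ s in (0:ℝ)..t, ∫ y in Ω, K x y * deriv ρ (u x s - u y s))
    (R : ℝ) (hubd : ∀ x ∈ Ω, ∀ t ∈ Ico (0:ℝ) T, |u x t| ≤ R) :
    ∃ η > (0:ℝ), ∃ uhat : EuclideanSpace ℝ (Fin n) → ℝ → ℝ,
      ContinuousOn (fun p : EuclideanSpace ℝ (Fin n) × ℝ => uhat p.1 p.2)
        (Ω ×ˢ Ico 0 (T + η)) ∧
      (∃ M : ℝ, ∀ x ∈ Ω, ∀ t ∈ Ico (0:ℝ) (T + η), |uhat x t| ≤ M) ∧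
      (∀ x ∈ Ω, ∀ t ∈ Ico (0:ℝ) (T + η),
        uhat x t = u₀ x + ∫ s in (0:ℝ)..t, ∫ y in Ω, K x y * deriv ρ (uhat x s - uhat y s)) ∧
      (∀ x ∈ Ω, ∀ t ∈ Ico (0:ℝ) T, uhat x t = u x t) := by
  obtain ⟨x₀, hx₀⟩ := hΩne
  have hK : IsAdmissibleKernel volume Ω K D :=
    { measurableSet := hΩmeas, nonneg := hKnonneg, integrableOn := hKint, integral_le := hD
      bound_nonneg := (integral_nonneg fun y => hKnonneg x₀ y).trans (hD x₀ hx₀)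
      tendsto_integral_abs_sub := fun x hx =>
        tendsto_integral_abs_sub_of_forall_dist_lt (hKcont x hx) }
  have hR : 0 ≤ R := (abs_nonneg _).trans (hubd x₀ hx₀ 0 ⟨le_rfl, hT⟩)
  obtain ⟨L₀, hL₀⟩ := hρ'lip (2 * (R + 1)) (by positivity)
  obtain ⟨L, C, ψ, hψ, hψC, hψρ⟩ := exists_lipschitzWith_bounded_eq_of_abs_le (by positivity) hL₀
  have hCD : 0 ≤ C * D := mul_nonneg ((abs_nonneg _).trans (hψC 0)) hK.bound_nonneg
  set η := 1 / (C * D + 1)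
  have hη : 0 < η := div_pos one_pos (by linarith)
  have hCDη : C * D * η ≤ 1 := by
    rw [mul_one_div, div_le_one (by linarith)]
    linarith
  obtain ⟨U, hUc, hU⟩ := exists_eq_picard hK hψ hψC hu₀cont hu₀bd (T + η)
  have hρψ {h : EuclideanSpace ℝ (Fin n) → ℝ → ℝ} {t : ℝ}
      (hh : ∀ y ∈ Ω, ∀ s ∈ Icc 0 t, |h y s| ≤ R + 1) {x} (hx : x ∈ Ω) (ht : 0 ≤ t) :
      picard volume Ω K (deriv ρ) u₀ h x t = picard volume Ω K ψ u₀ h x t :=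
    picard_congr_of_abs_le (μ := volume) (K := K) (fun a ha => (hψρ a ha).symm) hΩmeas u₀ hh hx ht
  have huψ : ∀ x ∈ Ω, ∀ t ∈ Ico 0 T, u x t = picard volume Ω K ψ u₀ u x t := fun x hx t ht =>
    (hueq x hx t ht).trans
      (hρψ (fun y hy s hs => by linarith [hubd y hy s ⟨hs.1, hs.2.trans_lt ht.2⟩]) hx ht.1)
  have hUu := eqOn_Ico_of_eq_picard hK hψ hψC hu₀bd (by linarith) hUc hucont hU huψ
  have hUR : ∀ x ∈ Ω, ∀ t ∈ Icc 0 (T + η), |U x t| ≤ R + 1 := fun x hx t ht => by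
    refine (abs_le_of_eq_picard hK hψ.continuous hψC hUc hU hT (by linarith)
      (fun y hy s hs => hUu y hy s hs ▸ hubd y hy s hs) hx ht).trans ?_
    rw [add_sub_cancel_left]
    linarith
  refine ⟨η, hη, U, hUc.mono (prod_mono_right Ico_subset_Icc_self),
    ⟨R + 1, fun x hx t ht => hUR x hx t (Ico_subset_Icc_self ht)⟩, fun x hx t ht => ?_, hUu⟩
  rw [hU x hx t (Ico_subset_Icc_self ht),
    ← hρψ (fun y hy s hs => hUR y hy s ⟨hs.1, hs.2.trans ht.2.le⟩) hx ht.1]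
  rfl

/-- If `u` is a solution of the IVP on `Ω × [0,T)` with `T < ∞` which remains
uniformly bounded, then the solution extends to a bounded continuous solution on
`Ω × [0, T+η)` for some `η > 0`.  (Equivalently, a finite maximal existence time forces
blow-up of the sup norm.) -/
theorem statement3
    (n : ℕ) (Ω : Set (EuclideanSpace ℝ (Fin n)))
    (hΩne : Ω.Nonempty) (hΩmeas : MeasurableSet Ω)
    -- `K` is an admissible kernel:
    (K : EuclideanSpace ℝ (Fin n) → EuclideanSpace ℝ (Fin n) → ℝ)
    (hKnonneg : ∀ x y, 0 ≤ K x y)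
    (hKmeas : Measurable (Function.uncurry K))
    (hKint : ∀ x ∈ Ω, IntegrableOn (K x) Ω)
    (hKcont : ∀ x ∈ Ω, ∀ ε > (0:ℝ), ∃ δ > (0:ℝ), ∀ x' ∈ Ω, dist x' x < δ →
        (∫ y in Ω, |K x' y - K x y|) < ε)
    (D : ℝ) (hD : ∀ x ∈ Ω, (∫ y in Ω, K x y) ≤ D)
    -- `ρ` is a recognition function:
    (ρ : ℝ → ℝ) (hρ : Differentiable ℝ ρ)
    (hρ'lip : ∀ R : ℝ, 0 < R → ∃ L : ℝ, ∀ a b : ℝ, |a| ≤ R → |b| ≤ R →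
        |deriv ρ a - deriv ρ b| ≤ L * |a - b|)
    -- `u₀` bounded and continuous on `Ω`:
    (u₀ : EuclideanSpace ℝ (Fin n) → ℝ)
    (hu₀cont : ContinuousOn u₀ Ω) (M₀ : ℝ) (hu₀bd : ∀ x ∈ Ω, |u₀ x| ≤ M₀)
    -- `u` solves the IVP on `Ω × [0,T)` and stays uniformly bounded:
    (T : ℝ) (hT : 0 < T)
    (u : EuclideanSpace ℝ (Fin n) → ℝ → ℝ)
    (hucont : ContinuousOn (fun p : EuclideanSpace ℝ (Fin n) × ℝ => u p.1 p.2) (Ω ×ˢ Ico 0 T))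
    (hueq : ∀ x ∈ Ω, ∀ t ∈ Ico (0:ℝ) T,
        u x t = u₀ x + ∫ s in (0:ℝ)..t, ∫ y in Ω, K x y * deriv ρ (u x s - u y s))
    (R : ℝ) (hubd : ∀ x ∈ Ω, ∀ t ∈ Ico (0:ℝ) T, |u x t| ≤ R) :
    ∃ η > (0:ℝ), ∃ uhat : EuclideanSpace ℝ (Fin n) → ℝ → ℝ,
      ContinuousOn (fun p : EuclideanSpace ℝ (Fin n) × ℝ => uhat p.1 p.2)
        (Ω ×ˢ Ico 0 (T + η)) ∧
      (∃ M : ℝ, ∀ x ∈ Ω, ∀ t ∈ Ico (0:ℝ) (T + η), |uhat x t| ≤ M) ∧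
      (∀ x ∈ Ω, ∀ t ∈ Ico (0:ℝ) (T + η),
        uhat x t = u₀ x + ∫ s in (0:ℝ)..t, ∫ y in Ω, K x y * deriv ρ (uhat x s - uhat y s)) ∧
      (∀ x ∈ Ω, ∀ t ∈ Ico (0:ℝ) T, uhat x t = u x t) :=
  statement3_general n Ω hΩne hΩmeas K hKnonneg hKint hKcont D hD ρ hρ'lip u₀ hu₀cont M₀ hu₀bd T hT
    u hucont hueq R hubd
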